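/- Let ABC be a triangle, K a point inside it, and K₁ the isogonal conjugate of K with respect to ABC. Let E and F be the orthogonal projections of K₁ onto lines CA and AB respectively. Then the line AK is perpendicular to the line EF. -/

import Mathlib

open EuclideanGeometry Real

noncomputable def triArea (X Y Z : EuclideanSpace ℝ (Fin 2)) : ℝ :=
  |(Y 0 - X 0) * (Z 1 - X 1) - (Y 1 - X 1) * (Z 0 - X 0)| / 2

/-- `F` is the foot of the perpendicular from `P` to the line through `X` and `Y`. -/
def IsFoot (P F X Y : EuclideanSpace ℝ (Fin 2)) : Prop :=
  F ∈ affineSpan ℝ ({X, Y} : Set (EuclideanSpace ℝ (Fin 2))) ∧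
    inner ℝ (P - F) (Y - X) = (0 : ℝ)

/-- `K₁` is the isogonal conjugate of `K` with respect to triangle `ABC`. -/
def IsIsogonalConj (A B C K K₁ : EuclideanSpace ℝ (Fin 2)) : Prop :=
  ∠ K₁ A B = ∠ K A C ∧ ∠ K₁ B C = ∠ K B A ∧ ∠ K₁ C A = ∠ K C B

/-!
Put `u = B - A`, `v = C - A`, `k = K - A`, `w = K₁ - A`. The feet are
`F = A + (⟪w, u⟫ / ‖u‖²) u` and `E = A + (⟪w, v⟫ / ‖v‖²) v`, and a planar identity turns
`⟪k, F - E⟫ = 0` into `⟪w, u⟫ (k × v) = (u × w) ⟪k, v⟫`: the oriented angle from `u` to `w`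
equals the one from `k` to `v`, up to a half-turn. The unoriented equality `∠K₁AB = ∠KAC` yields
this unless `K₁` lies strictly beyond the side `AB`. In that case the conditions at `B` and then
at `C` force `K₁` strictly beyond `BC` and beyond `CA` as well, which is impossible because the
signed areas of `K₁AB`, `K₁BC`, `K₁CA` add up to that of `ABC`.
-/

open InnerProductGeometry Finset
open scoped RealInnerProductSpace

local notation "ℝ²" => EuclideanSpace ℝ (Fin 2)

theorem InnerProductGeometry.inner_mul_norm_mul_norm_eq_of_angle_eq {E : Type*}
    [NormedAddCommGroup E] [InnerProductSpace ℝ E] {x y z t : E} (h : angle x y = angle z t) :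
    ⟪x, y⟫ * (‖z‖ * ‖t‖) = ⟪z, t⟫ * (‖x‖ * ‖y‖) := by
  rw [← cos_angle_mul_norm_mul_norm x y, ← cos_angle_mul_norm_mul_norm z t, h]
  ring

/-- Read `(cy, P) / ny` and `(cz, R) / nz` as `(cos, sin)` of two angles in `[0, π]` (after a
common sign flip): `h` says that the first has the larger cotangent, the conclusion that it has
the larger cosine. -/
theorem cos_lt_cos_of_cot_lt_cot {P R cy cz ny nz : ℝ} (hny : 0 < ny) (hnz : 0 < nz)
    (hy : ny ^ 2 = P ^ 2 + cy ^ 2) (hz : nz ^ 2 = R ^ 2 + cz ^ 2) (hPR : 0 ≤ P * R)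
    (h : P ^ 2 * cz < P * R * cy) : cz * ny < cy * nz := by
  have key : P ^ 2 * ((cy * nz) ^ 2 - (cz * ny) ^ 2)
      = (P * R * cy - P ^ 2 * cz) * (P * R * cy + P ^ 2 * cz) := by
    linear_combination (P ^ 2 * cy ^ 2) * hz - P ^ 2 * cz ^ 2 * hy
  have hgap : 0 < P * R * cy - P ^ 2 * cz := by linarith
  rcases le_or_gt 0 cz with hcz | hcz
  · have hcy : 0 < P * R * cy := by nlinarith [sq_nonneg P]
    have hprod := mul_pos hgap (show 0 < P * R * cy + P ^ 2 * cz by nlinarith [sq_nonneg P])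
    rw [← key] at hprod
    have hsq : (cz * ny) ^ 2 < (cy * nz) ^ 2 := by
      linarith [pos_of_mul_pos_right hprod (sq_nonneg P)]
    have : 0 < cy := pos_of_mul_pos_right hcy hPR
    exact (pow_lt_pow_iff_left₀ (by positivity) (by positivity) two_ne_zero).mp hsq
  rcases le_or_gt 0 cy with hcy | hcy
  · nlinarith
  have hprod := mul_neg_of_pos_of_neg hgap
    (show P * R * cy + P ^ 2 * cz < 0 by nlinarith [mul_nonpos_of_nonneg_of_nonpos hPR hcy.le])
  rw [← key] at hprod
  have hsq : (-cy * nz) ^ 2 < (-cz * ny) ^ 2 := by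
    nlinarith [neg_of_mul_neg_right hprod (sq_nonneg P)]
  have := (pow_lt_pow_iff_left₀ (by nlinarith) (by nlinarith) two_ne_zero).mp hsq
  linarith

namespace InnerProductGeometry

def cross (x y : ℝ²) : ℝ := x 0 * y 1 - x 1 * y 0

theorem inner_fin_two (x y : ℝ²) : ⟪x, y⟫ = x 0 * y 0 + x 1 * y 1 := by
  simp [PiLp.inner_apply, Fin.sum_univ_two, mul_comm]

theorem norm_sq_fin_two (x : ℝ²) : ‖x‖ ^ 2 = x 0 ^ 2 + x 1 ^ 2 := by
  rw [← real_inner_self_eq_norm_sq, inner_fin_two]; ring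

theorem cross_swap (x y : ℝ²) : cross y x = -cross x y := by
  simp only [cross]; ring

theorem cross_sq_add_inner_sq (x y : ℝ²) : cross x y ^ 2 + ⟪x, y⟫ ^ 2 = ‖x‖ ^ 2 * ‖y‖ ^ 2 := by
  rw [inner_fin_two, norm_sq_fin_two, norm_sq_fin_two, cross]; ring

theorem cross_mul_inner_sub_cross_mul_inner (b y z : ℝ²) :
    cross b y * ⟪b, z⟫ - cross b z * ⟪b, y⟫ = -(‖b‖ ^ 2 * cross y z) := by
  simp only [inner_fin_two, norm_sq_fin_two, cross]; ring

theorem ne_zero_and_ne_zero_of_cross_ne_zero {x y : ℝ²} (h : cross x y ≠ 0) : x ≠ 0 ∧ y ≠ 0 := by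
  constructor <;> rintro rfl <;> simp [cross] at h

/-- The hypotheses say that, seen from `b`, the vector `z` lies beyond `y` and on the same
closed side of the line `ℝ b`. -/
theorem angle_lt_angle_of_cross {b y z : ℝ²} (hyz : 0 < cross b y * cross y z)
    (hz : 0 ≤ cross b y * cross b z) : angle b y < angle b z := by
  obtain ⟨hb0, hy0⟩ := ne_zero_and_ne_zero_of_cross_ne_zero (left_ne_zero_of_mul hyz.ne')
  have hz0 := (ne_zero_and_ne_zero_of_cross_ne_zero (right_ne_zero_of_mul hyz.ne')).2
  rw [← strictAntiOn_cos.lt_iff_gt ⟨angle_nonneg _ _, angle_le_pi _ _⟩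
    ⟨angle_nonneg _ _, angle_le_pi _ _⟩, cos_angle, cos_angle,
    div_lt_div_iff₀ (by positivity) (by positivity)]
  refine cos_lt_cos_of_cot_lt_cot (by positivity) (by positivity) ?_ ?_ hz ?_
  · rw [mul_pow, ← cross_sq_add_inner_sq]
  · rw [mul_pow, ← cross_sq_add_inner_sq]
  · have := mul_pos (pow_pos (norm_pos_iff.mpr hb0) 2) hyz
    linear_combination this + cross b y * cross_mul_inner_sub_cross_mul_inner b y z

/-- The hypotheses say that `k` lies strictly inside the angle from `u` to `v`, and `w` strictly
beyond the line `ℝ v`; the conclusion, that `w` lies strictly beyond the line `ℝ u`. -/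
theorem cross_mul_cross_neg_of_angle_eq {u v k w : ℝ²} (hk : 0 < cross u v * cross u k)
    (hk' : 0 < cross u v * cross k v) (hw : 0 < cross u v * cross v w)
    (h : angle w u = angle k v) : cross u v * cross u w < 0 := by
  by_contra! hw'
  have hvw : angle u v < angle u w := angle_lt_angle_of_cross hw hw'
  have hku : angle v k < angle v u := by
    refine angle_lt_angle_of_cross ?_ ?_
    · rw [cross_swap k v, cross_swap u k]
      have : 0 < cross u v ^ 2 * (cross u k * cross k v) := by linear_combination mul_pos hk hk'
      linarith [pos_of_mul_pos_right this (sq_nonneg _)]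
    · rw [cross_swap k v, cross_swap u v]
      linarith
  have : angle u w < angle u w := calc
    angle u w = angle k v := by rw [angle_comm, h]
    _ = angle v k := angle_comm _ _
    _ < angle v u := hku
    _ = angle u v := angle_comm _ _
    _ < angle u w := hvw
  exact lt_irrefl _ this

theorem inner_mul_cross_eq_or_cross_mul_cross_neg {u v k w : ℝ²} (hk : 0 < cross u v * cross k v)
    (h : angle w u = angle k v) :
    ⟪w, u⟫ * cross k v = cross u w * ⟪k, v⟫ ∨ cross u v * cross u w < 0 := by
  obtain ⟨hu, hv⟩ := ne_zero_and_ne_zero_of_cross_ne_zero (left_ne_zero_of_mul hk.ne')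
  have hk0 := (ne_zero_and_ne_zero_of_cross_ne_zero (right_ne_zero_of_mul hk.ne')).1
  have hkv : 0 < ‖k‖ * ‖v‖ := by positivity
  have hcos := inner_mul_norm_mul_norm_eq_of_angle_eq h
  have hsq : (cross u w * (‖k‖ * ‖v‖)) ^ 2 = (cross k v * (‖w‖ * ‖u‖)) ^ 2 := by
    rw [real_inner_comm] at hcos
    linear_combination (‖k‖ * ‖v‖) ^ 2 * cross_sq_add_inner_sq u w
      - (‖w‖ * ‖u‖) ^ 2 * cross_sq_add_inner_sq k v
      - (⟪u, w⟫ * (‖k‖ * ‖v‖) + ⟪k, v⟫ * (‖w‖ * ‖u‖)) * hcos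
  rcases sq_eq_sq_iff_eq_or_eq_neg.mp hsq with hpos | hneg
  · left
    refine mul_left_cancel₀ hkv.ne' ?_
    linear_combination cross k v * hcos - ⟪k, v⟫ * hpos
  rcases eq_or_ne w 0 with rfl | hw
  · simp [cross]
  right
  have hwu : 0 < ‖w‖ * ‖u‖ := by positivity
  have : cross u v * cross u w * (‖k‖ * ‖v‖) < 0 := by
    rw [mul_assoc, hneg, mul_neg, ← mul_assoc, neg_lt_zero]
    exact mul_pos hk hwu
  exact neg_of_mul_neg_left this hkv.le

theorem inner_smul_sub_smul_eq_zero_of_inner_mul_cross_eq {u v k w : ℝ²} {τ σ : ℝ} (hu : u ≠ 0)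
    (hv : v ≠ 0) (hτ : ⟪w, u⟫ = τ * ‖u‖ ^ 2) (hσ : ⟪w, v⟫ = σ * ‖v‖ ^ 2)
    (h : ⟪w, u⟫ * cross k v = cross u w * ⟪k, v⟫) : ⟪k, τ • u - σ • v⟫ = 0 := by
  have key : ⟪w, u⟫ * ⟪k, u⟫ * ‖v‖ ^ 2 - ⟪w, v⟫ * ⟪k, v⟫ * ‖u‖ ^ 2
      = cross u v * (⟪w, u⟫ * cross k v - cross u w * ⟪k, v⟫) := by
    simp only [inner_fin_two, norm_sq_fin_two, cross]; ring
  rw [inner_sub_right, real_inner_smul_right, real_inner_smul_right]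
  refine mul_left_cancel₀ (show ‖u‖ ^ 2 * ‖v‖ ^ 2 ≠ 0 by positivity) ?_
  linear_combination -(⟪k, u⟫ * ‖v‖ ^ 2) * hτ + (⟪k, v⟫ * ‖u‖ ^ 2) * hσ + key + cross u v * h

end InnerProductGeometry

theorem IsFoot.symm {P F X Y : ℝ²} (h : IsFoot P F X Y) : IsFoot P F Y X :=
  ⟨Set.pair_comm X Y ▸ h.1, by rw [← neg_sub Y X, inner_neg_right, h.2, neg_zero]⟩

theorem IsFoot.exists_sub_eq_smul {P F X Y : ℝ²} (h : IsFoot P F X Y) :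
    ∃ t : ℝ, F - X = t • (Y - X) ∧ ⟪P - X, Y - X⟫ = t * ‖Y - X‖ ^ 2 := by
  obtain ⟨t, rfl⟩ := mem_affineSpan_pair_iff_exists_lineMap_eq.mp h.1
  have hF : AffineMap.lineMap X Y t - X = t • (Y - X) := AffineMap.lineMap_vsub_left X Y t
  refine ⟨t, hF, ?_⟩
  rw [← sub_add_sub_cancel P (AffineMap.lineMap X Y t) X, inner_add_left, h.2, hF,
    real_inner_smul_left, real_inner_self_eq_norm_sq, zero_add]

theorem exists_pos_coords_of_mem_interior_convexHull {E : Type*} [NormedAddCommGroup E]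
    [NormedSpace ℝ E] [FiniteDimensional ℝ E] (hE : Module.finrank ℝ E = 2) {A B C K : E}
    (hABC : AffineIndependent ℝ ![A, B, C]) (hK : K ∈ interior (convexHull ℝ {A, B, C})) :
    ∃ α β γ : ℝ, 0 < α ∧ 0 < β ∧ 0 < γ ∧ α + β + γ = 1 ∧ α • A + β • B + γ • C = K := by
  let b : AffineBasis (Fin 3) ℝ E :=
    ⟨![A, B, C], hABC, by rw [hABC.affineSpan_eq_top_iff_card_eq_finrank_add_one, hE]; rfl⟩
  have hrange : Set.range b = {A, B, C} := by
    change Set.range ![A, B, C] = _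
    rw [Matrix.range_cons, Matrix.range_cons, Matrix.range_cons_empty]
    simp only [Set.singleton_union]
  rw [← hrange, b.interior_convexHull] at hK
  refine ⟨b.coord 0 K, b.coord 1 K, b.coord 2 K, hK 0, hK 1, hK 2, ?_, ?_⟩
  · rw [← b.sum_coord_apply_eq_one K, Fin.sum_univ_three]
  · have h := b.linear_combination_coord_eq_self K
    rwa [Fin.sum_univ_three] at h

/-- Twice the signed area of the triangle `PQR`. -/
def orientedArea (P Q R : ℝ²) : ℝ := cross (Q - P) (R - P)

theorem orientedArea_rotate (P Q R : ℝ²) : orientedArea P Q R = orientedArea Q R P := by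
  simp only [orientedArea, cross, PiLp.sub_apply]; ring

theorem orientedArea_swap (P Q R : ℝ²) : orientedArea P Q R = -orientedArea P R Q :=
  cross_swap _ _

theorem orientedArea_add_orientedArea_add_orientedArea (A B C X : ℝ²) :
    orientedArea A B X + orientedArea B C X + orientedArea C A X = orientedArea A B C := by
  simp only [orientedArea, cross, PiLp.sub_apply]; ring

theorem orientedArea_ne_zero_of_affineIndependent {A B C : ℝ²}
    (h : AffineIndependent ℝ ![A, B, C]) : orientedArea A B C ≠ 0 := by
  intro h0
  simp only [orientedArea, cross, PiLp.sub_apply] at h0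
  -- if `(B - A) × (C - A) = 0` then `‖C - A‖² (B - A) = ⟪B - A, C - A⟫ (C - A)`
  have hCA : ‖C - A‖ ^ 2 = 0 := by
    refine h.eq_zero_of_sum_eq_zero (s := univ)
      (w := ![⟪B - A, C - A⟫ - ‖C - A‖ ^ 2, ‖C - A‖ ^ 2, -⟪B - A, C - A⟫])
      (by simp [Fin.sum_univ_three]) ?_ 1 (mem_univ _)
    ext i
    fin_cases i
    · simp [Fin.sum_univ_three, inner_fin_two, norm_sq_fin_two]
      linear_combination (C 1 - A 1) * h0
    · simp [Fin.sum_univ_three, inner_fin_two, norm_sq_fin_two]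
      linear_combination -(C 0 - A 0) * h0
  have hAC : A = C := (sub_eq_zero.mp (by simpa using hCA)).symm
  exact h.injective.ne (show (0 : Fin 3) ≠ 2 by decide) hAC

theorem orientedArea_mul_pos_of_mem_interior_convexHull {A B C K : ℝ²}
    (hABC : AffineIndependent ℝ ![A, B, C]) (hK : K ∈ interior (convexHull ℝ {A, B, C})) :
    0 < orientedArea A B C * orientedArea A B K ∧ 0 < orientedArea A B C * orientedArea B C K ∧
      0 < orientedArea A B C * orientedArea C A K := by
  obtain ⟨α, β, γ, hα, hβ, hγ, hsum, rfl⟩ :=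
    exists_pos_coords_of_mem_interior_convexHull finrank_euclideanSpace_fin hABC hK
  obtain rfl : α = 1 - β - γ := by linarith
  have hs := pow_two_pos_of_ne_zero (orientedArea_ne_zero_of_affineIndependent hABC)
  simp only [orientedArea, cross, PiLp.add_apply, PiLp.sub_apply, PiLp.smul_apply,
    smul_eq_mul] at hs ⊢
  refine ⟨?_, ?_, ?_⟩ <;> nlinarith

theorem inner_mul_cross_eq_or_orientedArea_mul_neg {P N R K K₁ : ℝ²}
    (hR : 0 < orientedArea P N R * orientedArea R P K) (h : ∠ K₁ P N = ∠ K P R) :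
    ⟪K₁ - P, N - P⟫ * cross (K - P) (R - P) = cross (N - P) (K₁ - P) * ⟪K - P, R - P⟫ ∨
      orientedArea P N R * orientedArea P N K₁ < 0 := by
  rw [orientedArea_rotate R P] at hR
  exact inner_mul_cross_eq_or_cross_mul_cross_neg hR h

theorem orientedArea_mul_neg_of_angle_eq {P N R K K₁ : ℝ²}
    (hN : 0 < orientedArea P N R * orientedArea P N K)
    (hR : 0 < orientedArea P N R * orientedArea R P K) (h : ∠ K₁ P N = ∠ K P R)
    (hK₁ : orientedArea P N R * orientedArea R P K₁ < 0) :
    orientedArea P N R * orientedArea P N K₁ < 0 := by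
  rw [orientedArea_rotate R P] at hR hK₁
  rw [orientedArea_swap P K₁, mul_neg, neg_lt_zero] at hK₁
  exact cross_mul_cross_neg_of_angle_eq hN hR hK₁ h

theorem isogonal_perp (A B C K K₁ E F : EuclideanSpace ℝ (Fin 2))
    (hABC : AffineIndependent ℝ ![A, B, C])
    (hK : K ∈ interior (convexHull ℝ ({A, B, C} : Set (EuclideanSpace ℝ (Fin 2)))))
    (hK₁ : IsIsogonalConj A B C K K₁)
    (hE : IsFoot K₁ E C A) (hF : IsFoot K₁ F A B) :
    inner ℝ (K - A) (F - E) = (0 : ℝ) := by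
  obtain ⟨hA, hB, hC⟩ := hK₁
  obtain ⟨hAB, hBC, hCA⟩ := orientedArea_mul_pos_of_mem_interior_convexHull hABC hK
  have hsB := orientedArea_rotate A B C
  have hsC := orientedArea_rotate B C A
  have hsigned := (inner_mul_cross_eq_or_orientedArea_mul_neg hCA hA).resolve_right fun hA₁ => by
    have hB₁ := orientedArea_mul_neg_of_angle_eq (P := B) (N := C) (R := A)
      (hsB ▸ hBC) (hsB ▸ hAB) hB (hsB ▸ hA₁)
    have hC₁ := orientedArea_mul_neg_of_angle_eq (P := C) (N := A) (R := B)
      (hsC ▸ hsB ▸ hCA) (hsC ▸ hsB ▸ hBC) hC (hsC ▸ hB₁)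
    rw [← hsB] at hB₁
    rw [← hsC, ← hsB] at hC₁
    have hsum := congrArg (orientedArea A B C * ·) <|
      orientedArea_add_orientedArea_add_orientedArea A B C K₁
    simp only [mul_add] at hsum
    nlinarith [mul_self_nonneg (orientedArea A B C)]
  obtain ⟨τ, hFA, hτ⟩ := hF.exists_sub_eq_smul
  obtain ⟨σ, hEA, hσ⟩ := hE.symm.exists_sub_eq_smul
  obtain ⟨hu, hv⟩ :=
    ne_zero_and_ne_zero_of_cross_ne_zero (orientedArea_ne_zero_of_affineIndependent hABC)
  rw [← sub_sub_sub_cancel_right F E A, hFA, hEA]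
  exact inner_smul_sub_smul_eq_zero_of_inner_mul_cross_eq hu hv hτ hσ hsigned
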